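/- Let M and M' be real n×m matrices, both of rank n, and let c > 0 be a constant such that for every strictly increasing tuple of column indices 1 ≤ i₁ < ⋯ < i_n ≤ m, the n×n submatrices formed by these columns satisfy |det M_{i₁…i_n}| = c·|det M'_{i₁…i_n}|. Then there exist an invertible real n×n matrix S and signs σ₁,…,σ_m ∈ {−1, +1} such that M' = S · M · diag(σ₁,…,σ_m); equivalently, the j-th column of M' equals σ_j S times the j-th column of M for every j. -/

import Mathlib

open Matrix

namespace Stmt19aux
open Finset

variable {n m : ℕ}

/-- hypothesis: all square submatrices have equal |det| -/
def Hyp (A B : Matrix (Fin n) (Fin m) ℝ) : Prop :=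
  ∀ (k : ℕ) (u : Fin k → Fin n) (v : Fin k → Fin m),
    |(A.submatrix u v).det| = |(B.submatrix u v).det|

noncomputable def eps (A B : Matrix (Fin n) (Fin m) ℝ) (i : Fin n) (j : Fin m) : ℝ :=
  if B i j = A i j then 1 else -1

lemma eps_pm (A B : Matrix (Fin n) (Fin m) ℝ) (i : Fin n) (j : Fin m) :
    eps A B i j = 1 ∨ eps A B i j = -1 := by
  unfold eps; split <;> simp

lemma eps_sq (A B : Matrix (Fin n) (Fin m) ℝ) (i : Fin n) (j : Fin m) :
    eps A B i j * eps A B i j = 1 := by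
  rcases eps_pm A B i j with h | h <;> rw [h] <;> norm_num

lemma habs {A B : Matrix (Fin n) (Fin m) ℝ} (H : Hyp A B) (i : Fin n) (j : Fin m) :
    |A i j| = |B i j| := by
  have := H 1 (fun _ => i) (fun _ => j)
  simpa [Matrix.det_fin_one, Matrix.submatrix_apply] using this

lemma B_eq {A B : Matrix (Fin n) (Fin m) ℝ} (H : Hyp A B) (i : Fin n) (j : Fin m) :
    B i j = eps A B i j * A i j := by
  have h := habs H i j
  unfold eps
  split
  · rw [one_mul]; assumption
  · rcases abs_eq_abs.mp h with h1 | h1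
    · exact absurd h1.symm (by assumption)
    · rw [neg_one_mul]; linarith

lemma key_pm {x y s t : ℝ} (hs : s = 1 ∨ s = -1) (ht : t = 1 ∨ t = -1)
    (h : |x + y| = |s * x + t * y|) (hx : x ≠ 0) (hy : y ≠ 0) : s = t := by
  have h2 := congrArg (· ^ 2) h
  simp only [sq_abs] at h2
  rcases hs with hs | hs <;> rcases ht with ht | ht <;> subst hs <;> subst ht <;> try rfl
  · exfalso
    have hxy : x * y = 0 := by nlinarith
    rcases mul_eq_zero.mp hxy with h' | h' <;> [exact hx h'; exact hy h']
  · exfalso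
    have hxy : x * y = 0 := by nlinarith
    rcases mul_eq_zero.mp hxy with h' | h' <;> [exact hx h'; exact hy h']

lemma L2 {A B : Matrix (Fin n) (Fin m) ℝ} (H : Hyp A B) {i i' : Fin n} {j j' : Fin m}
    (h1 : A i j ≠ 0) (h2 : A i' j' ≠ 0) (h3 : A i j' ≠ 0) (h4 : A i' j ≠ 0) :
    eps A B i j * eps A B i' j' = eps A B i j' * eps A B i' j := by
  have hd := H 2 ![i, i'] ![j, j']
  rw [Matrix.det_fin_two, Matrix.det_fin_two] at hd
  simp only [Matrix.submatrix_apply, Matrix.cons_val_zero, Matrix.cons_val_one,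
    Matrix.head_cons] at hd
  rw [B_eq H, B_eq H, B_eq H, B_eq H] at hd
  have hd' : |A i j * A i' j' + -(A i j' * A i' j)| =
      |(eps A B i j * eps A B i' j') * (A i j * A i' j') +
        (eps A B i j' * eps A B i' j) * (-(A i j' * A i' j))| := by
    convert hd using 2 <;> ring
  have := key_pm (s := eps A B i j * eps A B i' j') (t := eps A B i j' * eps A B i' j)
    ?_ ?_ hd' (mul_ne_zero h1 h2) (neg_ne_zero.mpr (mul_ne_zero h3 h4))
  · exact this
  · rcases eps_pm A B i j with h | h <;> rcases eps_pm A B i' j' with h' | h' <;>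
      rw [h, h'] <;> norm_num
  · rcases eps_pm A B i j' with h | h <;> rcases eps_pm A B i' j with h' | h' <;>
      rw [h, h'] <;> norm_num

def Edge (A : Matrix (Fin n) (Fin m) ℝ) (i i' : Fin n) : Prop :=
  ∃ j, A i j ≠ 0 ∧ A i' j ≠ 0

lemma Edge.symm {A : Matrix (Fin n) (Fin m) ℝ} {i i' : Fin n} (h : Edge A i i') :
    Edge A i' i := by
  obtain ⟨j, h1, h2⟩ := h; exact ⟨j, h2, h1⟩

open Classical in
noncomputable def sg (A B : Matrix (Fin n) (Fin m) ℝ) (i i' : Fin n) : ℝ :=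
  if h : Edge A i i' then eps A B i h.choose * eps A B i' h.choose else 1

lemma sg_pm (A B : Matrix (Fin n) (Fin m) ℝ) (i i' : Fin n) :
    sg A B i i' = 1 ∨ sg A B i i' = -1 := by
  unfold sg
  classical
  split
  · rcases eps_pm A B i _ with h | h <;> rcases eps_pm A B i' _ with h' | h' <;>
      rw [h, h'] <;> norm_num
  · left; rfl

lemma sg_sq (A B : Matrix (Fin n) (Fin m) ℝ) (i i' : Fin n) :
    sg A B i i' * sg A B i i' = 1 := by
  rcases sg_pm A B i i' with h | h <;> rw [h] <;> norm_num

lemma sg_spec {A B : Matrix (Fin n) (Fin m) ℝ} (H : Hyp A B) {i i' : Fin n} {j : Fin m}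
    (h1 : A i j ≠ 0) (h2 : A i' j ≠ 0) :
    sg A B i i' = eps A B i j * eps A B i' j := by
  have he : Edge A i i' := ⟨j, h1, h2⟩
  unfold sg
  rw [dif_pos he]

  obtain ⟨g1, g2⟩ := he.choose_spec
  set j0 := he.choose
  -- L2 with columns j0, j : eps i j0 * eps i' j = eps i j * eps i' j0
  have hl := L2 H (i := i) (i' := i') (j := j0) (j' := j) g1 h2 h1 g2
  have s1 := eps_sq A B i' j0
  have s2 := eps_sq A B i' j
  nlinarith [hl, s1, s2, eps_sq A B i j0, eps_sq A B i j]

lemma sg_symm {A B : Matrix (Fin n) (Fin m) ℝ} (H : Hyp A B) (i i' : Fin n) :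
    sg A B i i' = sg A B i' i := by
  by_cases h : Edge A i i'
  · obtain ⟨j, h1, h2⟩ := h
    rw [sg_spec H h1 h2, sg_spec H h2 h1, mul_comm]
  · unfold sg
    rw [dif_neg h, dif_neg (fun h' => h h'.symm)]

lemma sg_self {A B : Matrix (Fin n) (Fin m) ℝ} (H : Hyp A B) (i : Fin n) :
    sg A B i i = 1 := by
  by_cases h : Edge A i i
  · obtain ⟨j, h1, _⟩ := h
    rw [sg_spec H h1 h1]; exact eps_sq A B i j
  · unfold sg; rw [dif_neg h]

lemma sg_mul_symm {A B : Matrix (Fin n) (Fin m) ℝ} (H : Hyp A B) (i i' : Fin n) :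
    sg A B i i' * sg A B i' i = 1 := by
  rw [sg_symm H i i']; exact sg_sq A B i' i

def IsPath (A : Matrix (Fin n) (Fin m) ℝ) (k : ℕ) (x : ℕ → Fin n) : Prop :=
  ∀ t, t < k → Edge A (x t) (x (t + 1))

noncomputable def pprod (A B : Matrix (Fin n) (Fin m) ℝ) (k : ℕ) (x : ℕ → Fin n) : ℝ :=
  ∏ t ∈ Finset.range k, sg A B (x t) (x (t + 1))

lemma prod_pm {α : Type*} {s : Finset α} {f : α → ℝ} (h : ∀ i ∈ s, f i = 1 ∨ f i = -1) :
    (∏ i ∈ s, f i) = 1 ∨ (∏ i ∈ s, f i) = -1 := by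
  refine Finset.prod_induction f (fun r => r = 1 ∨ r = -1) ?_ (Or.inl rfl) h
  rintro a b (ha | ha) (hb | hb) <;> rw [ha, hb] <;> norm_num

lemma pprod_pm (A B : Matrix (Fin n) (Fin m) ℝ) (k : ℕ) (x : ℕ → Fin n) :
    pprod A B k x = 1 ∨ pprod A B k x = -1 :=
  prod_pm (fun t _ => sg_pm A B (x t) (x (t + 1)))

/-- contraction of an adjacent repeat -/
lemma contract {A B : Matrix (Fin n) (Fin m) ℝ} (H : Hyp A B) {k : ℕ} {x : ℕ → Fin n}
    (hk : 3 ≤ k) (hp : IsPath A k x) (hx : x k = x 0) {a : ℕ} (ha : a < k)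
    (hrep : x (a + 1) = x a) :
    ∃ y : ℕ → Fin n, IsPath A (k - 1) y ∧ y (k - 1) = y 0 ∧
      pprod A B (k - 1) y = pprod A B k x := by
  set g : ℕ → ℝ := fun t => sg A B (x t) (x (t + 1)) with hg
  rcases eq_or_lt_of_le (Nat.succ_le_of_lt ha) with heq | hlt
  · -- a = k - 1
    have hak : a = k - 1 := by omega
    refine ⟨x, fun t ht => hp t (by omega), ?_, ?_⟩
    · rw [← hak, ← hrep, show a + 1 = k by omega, hx]
    · have : pprod A B k x = pprod A B (k - 1) x * g (k - 1) := by
        unfold pprod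
        rw [show k = (k - 1) + 1 by omega, Finset.prod_range_succ]
        simp [hg]
      rw [this]
      have : g (k - 1) = 1 := by
        have : x ((k-1) + 1) = x (k-1) := by rw [← hak]; exact hrep
        rw [hg]; simp only; rw [this, sg_self H]
      rw [this, mul_one]
  · -- a + 1 < k
    set y : ℕ → Fin n := fun t => if t ≤ a then x t else x (t + 1) with hy
    have hy0 : y 0 = x 0 := by simp [hy]
    have hyk : y (k - 1) = x 0 := by
      rw [hy]; simp only [if_neg (by omega : ¬ k - 1 ≤ a)]
      rw [show k - 1 + 1 = k by omega, hx]
    refine ⟨y, ?_, by rw [hyk, hy0], ?_⟩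
    · intro t ht
      rcases lt_trichotomy t a with h | h | h
      · have : y t = x t := by simp [hy, le_of_lt h]
        have h2 : y (t + 1) = x (t + 1) := by rw [hy]; simp only [if_pos (by omega : t + 1 ≤ a)]
        rw [this, h2]; exact hp t (by omega)
      · subst h
        have : y t = x t := by simp [hy]
        have h2 : y (t + 1) = x (t + 2) := by
          rw [hy]; simp only [if_neg (by omega : ¬ t + 1 ≤ t)]
        rw [this, h2, ← hrep]
        exact hp (t + 1) (by omega)
      · have h1 : y t = x (t + 1) := by rw [hy]; simp only [if_neg (by omega : ¬ t ≤ a)]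
        have h2 : y (t + 1) = x (t + 2) := by
          rw [hy]; simp only [if_neg (by omega : ¬ t + 1 ≤ a)]
        rw [h1, h2]
        exact hp (t + 1) (by omega)
    · -- product equality
      have hsplit : pprod A B k x =
          (∏ t ∈ Finset.range a, g t) * (g a * (g (a + 1) * ∏ t ∈ Finset.Ico (a + 2) k, g t)) := by
        unfold pprod
        rw [← Finset.prod_range_mul_prod_Ico g (le_of_lt ha),
          Finset.prod_eq_prod_Ico_succ_bot ha g,
          Finset.prod_eq_prod_Ico_succ_bot (by omega : a + 1 < k) g]
      have hga : g a = 1 := by rw [hg]; simp only; rw [hrep, sg_self H]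
      have hsplit2 : pprod A B (k - 1) y =
          (∏ t ∈ Finset.range a, g t) *
            (sg A B (x a) (x (a + 2)) * ∏ t ∈ Finset.Ico (a + 1) (k - 1),
              sg A B (y t) (y (t + 1))) := by
        unfold pprod
        rw [← Finset.prod_range_mul_prod_Ico _ (by omega : a ≤ k - 1),
          Finset.prod_eq_prod_Ico_succ_bot (by omega : a < k - 1)]
        congr 1
        · apply Finset.prod_congr rfl
          intro t ht
          rw [Finset.mem_range] at ht
          have e1 : y t = x t := by simp [hy, le_of_lt ht]
          have e2 : y (t + 1) = x (t + 1) := by rw [hy]; simp only [if_pos (by omega : t + 1 ≤ a)]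
          rw [e1, e2]
        · congr 1
          have e1 : y a = x a := by simp [hy]
          have e2 : y (a + 1) = x (a + 2) := by
            rw [hy]; simp only [if_neg (by omega : ¬ a + 1 ≤ a)]
          rw [e1, e2]
      have hmid : ∏ t ∈ Finset.Ico (a + 1) (k - 1), sg A B (y t) (y (t + 1)) =
          ∏ t ∈ Finset.Ico (a + 2) k, g t := by
        rw [Finset.prod_Ico_eq_prod_range, Finset.prod_Ico_eq_prod_range]
        rw [show k - (a + 2) = k - 1 - (a + 1) by omega]
        apply Finset.prod_congr rfl
        intro t ht
        have e1 : y (a + 1 + t) = x (a + 2 + t) := by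
          rw [hy]; simp only [if_neg (by omega : ¬ a + 1 + t ≤ a)]; congr 1; omega
        have e2 : y (a + 1 + t + 1) = x (a + 2 + t + 1) := by
          rw [hy]; simp only [if_neg (by omega : ¬ a + 1 + t + 1 ≤ a)]; congr 1; omega
        rw [e1, e2]
      have hga1 : g (a + 1) = sg A B (x a) (x (a + 2)) := by
        rw [hg]; simp only; rw [hrep]
      rw [hsplit, hsplit2, hmid, hga, hga1]; ring

/-- splitting a cycle along a chord -/
lemma chordsplit {A B : Matrix (Fin n) (Fin m) ℝ} (H : Hyp A B) {k : ℕ} {x : ℕ → Fin n}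
    (hp : IsPath A k x) (hx : x k = x 0) {a b : ℕ}
    (hab : a < b) (hbk : b < k) (hE : Edge A (x a) (x b)) :
    ∃ w v : ℕ → Fin n, IsPath A (b - a + 1) w ∧ w (b - a + 1) = w 0 ∧
      IsPath A (k - (b - a) + 1) v ∧ v (k - (b - a) + 1) = v 0 ∧
      pprod A B k x = pprod A B (b - a + 1) w * pprod A B (k - (b - a) + 1) v := by
  set g : ℕ → ℝ := fun t => sg A B (x t) (x (t + 1)) with hg
  set d := b - a with hd'
  set w : ℕ → Fin n := fun t => if t ≤ d then x (a + t) else x a with hw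
  set k₂ := k - d + 1 with hk₂
  set v : ℕ → Fin n := fun t => if t ≤ a then x t else x (t + d - 1) with hv
  have hwpath : IsPath A (d + 1) w := by
    intro t ht
    rcases lt_or_eq_of_le (Nat.lt_succ_iff.mp ht) with h | h
    · have e1 : w t = x (a + t) := by rw [hw]; simp only [if_pos (le_of_lt h)]
      have e2 : w (t + 1) = x (a + t + 1) := by
        rw [hw]; simp only [if_pos (by omega : t + 1 ≤ d)]; congr 1 <;> omega
      rw [e1, e2]; exact hp (a + t) (by omega)
    · have e1 : w t = x b := by
        rw [hw]; simp only [h, if_pos (le_refl d)]; congr 1 <;> omega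
      have e2 : w (t + 1) = x a := by
        rw [hw]; simp only [h, if_neg (by omega : ¬ d + 1 ≤ d)]
      rw [e1, e2]; exact hE.symm
  have hwcyc : w (d + 1) = w 0 := by
    rw [hw]; simp only [if_neg (by omega : ¬ d + 1 ≤ d), if_pos (Nat.zero_le d)]
    simp
  have hvpath : IsPath A k₂ v := by
    intro t ht
    rcases lt_trichotomy t a with h | h | h
    · have e1 : v t = x t := by rw [hv]; simp only [if_pos (le_of_lt h)]
      have e2 : v (t + 1) = x (t + 1) := by rw [hv]; simp only [if_pos (by omega : t + 1 ≤ a)]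
      rw [e1, e2]; exact hp t (by omega)
    · have e1 : v t = x t := by rw [hv, h]; simp only [if_pos (le_refl a)]
      have e2 : v (t + 1) = x b := by
        rw [hv, h]; simp only [if_neg (by omega : ¬ a + 1 ≤ a)]; congr 1 <;> omega
      rw [e1, e2]; rw [h]; exact hE
    · have e1 : v t = x (t + d - 1) := by rw [hv]; simp only [if_neg (by omega : ¬ t ≤ a)]
      have e2 : v (t + 1) = x (t + d - 1 + 1) := by
        rw [hv]; simp only [if_neg (by omega : ¬ t + 1 ≤ a)]; congr 1 <;> omega
      rw [e1, e2]; exact hp (t + d - 1) (by omega)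
  have hvcyc : v k₂ = v 0 := by
    rw [hv]; simp only [if_neg (by omega : ¬ k₂ ≤ a), if_pos (Nat.zero_le a)]
    rw [show k₂ + d - 1 = k by omega, hx]
  refine ⟨w, v, hwpath, hwcyc, hvpath, hvcyc, ?_⟩
  have hwprod : pprod A B (d + 1) w = (∏ t ∈ Finset.Ico a b, g t) * sg A B (x b) (x a) := by
    unfold pprod
    rw [Finset.prod_range_succ]
    congr 1
    · rw [Finset.prod_Ico_eq_prod_range, show b - a = d from rfl]
      apply Finset.prod_congr rfl
      intro t ht
      rw [Finset.mem_range] at ht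
      have e1 : w t = x (a + t) := by rw [hw]; simp only [if_pos (le_of_lt ht)]
      have e2 : w (t + 1) = x (a + t + 1) := by
        rw [hw]; simp only [if_pos (by omega : t + 1 ≤ d)]; congr 1 <;> omega
      rw [e1, e2]
    · have e1 : w d = x b := by rw [hw]; simp only [if_pos (le_refl d)]; congr 1 <;> omega
      have e2 : w (d + 1) = x a := by rw [hw]; simp only [if_neg (by omega : ¬ d + 1 ≤ d)]
      rw [e1, e2]
  have hvprod : pprod A B k₂ v =
      (∏ t ∈ Finset.range a, g t) * (sg A B (x a) (x b) * ∏ t ∈ Finset.Ico b k, g t) := by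
    unfold pprod
    rw [← Finset.prod_range_mul_prod_Ico _ (by omega : a ≤ k₂),
      Finset.prod_eq_prod_Ico_succ_bot (by omega : a < k₂)]
    congr 1
    · apply Finset.prod_congr rfl
      intro t ht
      rw [Finset.mem_range] at ht
      have e1 : v t = x t := by rw [hv]; simp only [if_pos (le_of_lt ht)]
      have e2 : v (t + 1) = x (t + 1) := by rw [hv]; simp only [if_pos (by omega : t + 1 ≤ a)]
      rw [e1, e2]
    · congr 1
      · have e1 : v a = x a := by rw [hv]; simp only [if_pos (le_refl a)]
        have e2 : v (a + 1) = x b := by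
          rw [hv]; simp only [if_neg (by omega : ¬ a + 1 ≤ a)]; congr 1 <;> omega
        rw [e1, e2]
      · rw [Finset.prod_Ico_eq_prod_range, Finset.prod_Ico_eq_prod_range,
          show k₂ - (a + 1) = k - b by omega]
        apply Finset.prod_congr rfl
        intro t ht
        rw [Finset.mem_range] at ht
        have e1 : v (a + 1 + t) = x (b + t) := by
          rw [hv]; simp only [if_neg (by omega : ¬ a + 1 + t ≤ a)]; congr 1 <;> omega
        have e2 : v (a + 1 + t + 1) = x (b + t + 1) := by
          rw [hv]; simp only [if_neg (by omega : ¬ a + 1 + t + 1 ≤ a)]; congr 1 <;> omega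
        rw [e1, e2]
  have hxprod : pprod A B k x =
      (∏ t ∈ Finset.range a, g t) * ((∏ t ∈ Finset.Ico a b, g t) * ∏ t ∈ Finset.Ico b k, g t) := by
    unfold pprod
    rw [← Finset.prod_range_mul_prod_Ico _ (by omega : a ≤ k),
      ← Finset.prod_Ico_consecutive _ (le_of_lt hab) (le_of_lt hbk)]
  rw [hxprod, hwprod, hvprod]
  have hs := sg_mul_symm H (x a) (x b)
  linear_combination (-((∏ t ∈ Finset.range a, g t) * (∏ t ∈ Finset.Ico a b, g t) *
    (∏ t ∈ Finset.Ico b k, g t))) * hs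

lemma fin_one_ne_zero' {K : ℕ} (hK : 1 ≤ K) : (1 : Fin (K + 1)) ≠ 0 := by
  rcases K with _ | K'
  · omega
  · exact one_ne_zero

open Fin.NatCast in
lemma perm_cases {K : ℕ} (hK : 1 ≤ K) (σ : Equiv.Perm (Fin (K + 1)))
    (h : ∀ t, σ t = t ∨ σ t = t + 1) : σ = 1 ∨ σ = finRotate (K + 1) := by
  by_cases hσ : σ = 1
  · exact Or.inl hσ
  right
  have : ∃ t₀, σ t₀ ≠ t₀ := by
    by_contra hc
    push_neg at hc
    exact hσ (Equiv.ext fun t => hc t)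
  obtain ⟨t₀, ht₀⟩ := this
  have h0 : σ t₀ = t₀ + 1 := (h t₀).resolve_left ht₀
  have claim : ∀ d : ℕ, σ (t₀ + (d : Fin (K + 1))) = t₀ + (d : Fin (K + 1)) + 1 := by
    intro d
    induction d with
    | zero => simpa using h0
    | succ d ih =>
      have hcast : ((d + 1 : ℕ) : Fin (K + 1)) = (d : Fin (K + 1)) + 1 := by push_cast; ring
      rw [hcast, ← add_assoc]
      set s := t₀ + (d : Fin (K + 1)) + 1 with hs
      rcases h s with h' | h'
      · exfalso
        have : σ s = σ (t₀ + (d : Fin (K + 1))) := by rw [ih, h']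
        have heq := σ.injective this
        have : (1 : Fin (K + 1)) = 0 := by
          have := heq
          rw [hs] at this
          -- t₀ + d + 1 = t₀ + d
          have h2 : t₀ + (d : Fin (K + 1)) + 1 - (t₀ + (d : Fin (K + 1))) = 0 := by
            rw [this]; simp
          simpa using h2
        exact fin_one_ne_zero' hK this
      · exact h'
  have hall : ∀ y, σ y = y + 1 := by
    intro y
    have hy : t₀ + ((y - t₀).val : Fin (K + 1)) = y := by
      rw [Fin.cast_val_eq_self]; exact add_sub_cancel t₀ y
    rw [← hy, claim]
  exact Equiv.ext fun y => by rw [hall y, finRotate_succ_apply]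

lemma det_bimono {K : ℕ} (hK : 1 ≤ K) (C : Matrix (Fin (K + 1)) (Fin (K + 1)) ℝ)
    (hs : ∀ s t, C s t ≠ 0 → s = t ∨ s = t + 1) :
    C.det = (∏ t, C t t) + (-1) ^ K * ∏ t, C (t + 1) t := by
  classical
  rw [Matrix.det_apply]
  have hrotne : (1 : Equiv.Perm (Fin (K + 1))) ≠ finRotate (K + 1) := by
    intro hcon
    have : (0 : Fin (K + 1)) = finRotate (K + 1) 0 := by rw [← hcon]; rfl
    rw [finRotate_succ_apply, zero_add] at this
    exact fin_one_ne_zero' hK this.symm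
  have hvanish : ∀ σ ∈ (univ : Finset (Equiv.Perm (Fin (K + 1)))),
      σ ∉ ({1, finRotate (K + 1)} : Finset (Equiv.Perm (Fin (K + 1)))) →
      Equiv.Perm.sign σ • ∏ i, C (σ i) i = 0 := by
    intro σ _ hσ
    simp only [Finset.mem_insert, Finset.mem_singleton, not_or] at hσ
    have : ¬ ∀ t, σ t = t ∨ σ t = t + 1 := by
      intro hc
      rcases perm_cases hK σ hc with h | h
      · exact hσ.1 h
      · exact hσ.2 h
    push_neg at this
    obtain ⟨t, ht1, ht2⟩ := this
    have : C (σ t) t = 0 := by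
      by_contra hc
      rcases hs _ _ hc with h | h
      · exact ht1 h
      · exact ht2 h
    have hz : (∏ i, C (σ i) i) = 0 := Finset.prod_eq_zero (Finset.mem_univ t) this
    rw [hz, smul_zero]
  rw [← Finset.sum_subset (Finset.subset_univ ({1, finRotate (K + 1)} :
      Finset (Equiv.Perm (Fin (K + 1))))) hvanish]
  rw [Finset.sum_pair hrotne]
  congr 1
  · simp
  · rw [sign_finRotate]
    simp only [finRotate_succ_apply, Units.smul_def, zsmul_eq_mul]
    push_cast
    ring

lemma xmod {k : ℕ} {x : ℕ → Fin n} (hx : x k = x 0) {s : ℕ} (hs : s ≤ k) (hk : 0 < k) :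
    x (s % k) = x s := by
  rcases eq_or_lt_of_le hs with h | h
  · subst h; rw [Nat.mod_self, hx]
  · rw [Nat.mod_eq_of_lt h]


lemma tri_finish {A B : Matrix (Fin n) (Fin m) ℝ} (H : Hyp A B) {x : ℕ → Fin n}
    (hx : x 3 = x 0) {c : Fin m} (h0 : A (x 0) c ≠ 0) (h1 : A (x 1) c ≠ 0)
    (h2 : A (x 2) c ≠ 0) : pprod A B 3 x = 1 := by
  have hpp : pprod A B 3 x =
      sg A B (x 0) (x 1) * sg A B (x 1) (x 2) * sg A B (x 2) (x 3) := by
    unfold pprod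
    rw [show (3:ℕ) = 2 + 1 from rfl, Finset.prod_range_succ,
      show (2:ℕ) = 1 + 1 from rfl, Finset.prod_range_succ, Finset.prod_range_one]
  rw [hpp, hx, sg_spec H h0 h1, sg_spec H h1 h2, sg_spec H h2 h0]
  have s0 := eps_sq A B (x 0) c
  have s1 := eps_sq A B (x 1) c
  have s2 := eps_sq A B (x 2) c
  calc eps A B (x 0) c * eps A B (x 1) c * (eps A B (x 1) c * eps A B (x 2) c) *
        (eps A B (x 2) c * eps A B (x 0) c)
      = (eps A B (x 0) c * eps A B (x 0) c) * ((eps A B (x 1) c * eps A B (x 1) c) *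
        (eps A B (x 2) c * eps A B (x 2) c)) := by ring
    _ = 1 := by rw [s0, s1, s2]; norm_num

lemma triangle_case {A B : Matrix (Fin n) (Fin m) ℝ} (H : Hyp A B) {k : ℕ} {x : ℕ → Fin n}
    (hkk : k = 3) (hp : IsPath A k x) (hx : x k = x 0) {jj : ℕ → Fin m}
    (hj1 : ∀ t, t < k → A (x t) (jj t) ≠ 0 ∧ A (x (t + 1)) (jj t) ≠ 0)
    {a b : ℕ} (ha : a < k) (hb : b < k) (hne1 : a ≠ b) (hne2 : a ≠ (b + 1) % k)
    (hne0 : A (x a) (jj b) ≠ 0) : pprod A B k x = 1 := by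
  subst hkk
  have hx3 : x 3 = x 0 := hx
  interval_cases b <;> interval_cases a <;> simp_all <;> try omega
  · -- a = 2, b = 0
    exact tri_finish H hx3 (hj1 0 (by omega)).1 (hj1 0 (by omega)).2 hne0
  · -- a = 0, b = 1
    exact tri_finish H hx3 hne0 (hj1 1 (by omega)).1 (hj1 1 (by omega)).2
  · -- a = 1, b = 2
    have h0 : A (x 0) (jj 2) ≠ 0 := by rw [← hx3]; exact (hj1 2 (by omega)).2
    exact tri_finish H hx3 h0 hne0 (hj1 2 (by omega)).1

lemma bimono_case {A B : Matrix (Fin n) (Fin m) ℝ} (H : Hyp A B) {k : ℕ} {x : ℕ → Fin n}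
    (hk3 : 3 ≤ k) (hp : IsPath A k x) (hx : x k = x 0) {jj : ℕ → Fin m}
    (hj1 : ∀ t, t < k → A (x t) (jj t) ≠ 0 ∧ A (x (t + 1)) (jj t) ≠ 0)
    (hclm : ∀ a b, a < k → b < k → A (x a) (jj b) ≠ 0 → a = b ∨ a = (b + 1) % k) :
    pprod A B k x = 1 := by
  obtain ⟨K, rfl⟩ : ∃ K, k = K + 2 := ⟨k - 2, by omega⟩
  set u : Fin (K + 2) → Fin n := fun t => x t.val with hu
  set v : Fin (K + 2) → Fin m := fun t => jj t.val with hv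
  have hval1 : ∀ t : Fin (K + 2), ((t + 1 : Fin (K + 2))).val = (t.val + 1) % (K + 2) := by
    intro t
    rw [Fin.add_def]
    simp [Fin.val_one]
  have hCsupp : ∀ s t : Fin (K + 2), A.submatrix u v s t ≠ 0 → s = t ∨ s = t + 1 := by
    intro s t hst
    rw [Matrix.submatrix_apply] at hst
    rcases hclm s.val t.val s.isLt t.isLt hst with h | h
    · exact Or.inl (Fin.ext h)
    · exact Or.inr (Fin.ext (by rw [hval1]; exact h))
  have hDsupp : ∀ s t : Fin (K + 2), B.submatrix u v s t ≠ 0 → s = t ∨ s = t + 1 := by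
    intro s t hst
    apply hCsupp
    rw [Matrix.submatrix_apply] at hst ⊢
    intro hc
    exact hst (by rw [B_eq H, hc, mul_zero])
  have hdetC := det_bimono (K := K + 1) (by omega) (A.submatrix u v) hCsupp
  have hdetD := det_bimono (K := K + 1) (by omega) (B.submatrix u v) hDsupp
  have habsd := H (K + 2) u v
  set e1 : ℝ := ∏ t : Fin (K + 2), eps A B (x t.val) (jj t.val) with he1
  set e2 : ℝ := ∏ t : Fin (K + 2), eps A B (x ((t + 1 : Fin (K + 2)).val)) (jj t.val) with he2
  set P : ℝ := ∏ t : Fin (K + 2), A.submatrix u v t t with hP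
  set Q : ℝ := ∏ t : Fin (K + 2), A.submatrix u v (t + 1) t with hQ
  have hPD : (∏ t : Fin (K + 2), B.submatrix u v t t) = e1 * P := by
    rw [he1, hP, ← Finset.prod_mul_distrib]
    apply Finset.prod_congr rfl
    intro t _
    rw [Matrix.submatrix_apply, Matrix.submatrix_apply, hu, hv]
    exact B_eq H _ _
  have hQD : (∏ t : Fin (K + 2), B.submatrix u v (t + 1) t) = e2 * Q := by
    rw [he2, hQ, ← Finset.prod_mul_distrib]
    apply Finset.prod_congr rfl
    intro t _
    rw [Matrix.submatrix_apply, Matrix.submatrix_apply, hu, hv]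
    exact B_eq H _ _
  have hPne : P ≠ 0 := by
    rw [hP, Finset.prod_ne_zero_iff]
    intro t _
    rw [Matrix.submatrix_apply, hu, hv]
    exact (hj1 t.val t.isLt).1
  have hQne : Q ≠ 0 := by
    rw [hQ, Finset.prod_ne_zero_iff]
    intro t _
    rw [Matrix.submatrix_apply, hu, hv]
    simp only
    rw [hval1, xmod hx (by omega) (by omega)]
    exact (hj1 t.val t.isLt).2
  have he1pm : e1 = 1 ∨ e1 = -1 := prod_pm (fun t _ => eps_pm A B _ _)
  have he2pm : e2 = 1 ∨ e2 = -1 := prod_pm (fun t _ => eps_pm A B _ _)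
  rw [hdetC, hdetD, hPD, hQD] at habsd
  have hkey : |P + (-1 : ℝ) ^ (K + 1) * Q| =
      |e1 * P + e2 * ((-1 : ℝ) ^ (K + 1) * Q)| := by
    convert habsd using 2
    ring
  have hsQne : (-1 : ℝ) ^ (K + 1) * Q ≠ 0 :=
    mul_ne_zero (pow_ne_zero _ (by norm_num)) hQne
  have he12 := key_pm he1pm he2pm hkey hPne hsQne
  -- final computation
  have hsg : ∀ t ∈ Finset.range (K + 2), sg A B (x t) (x (t + 1)) =
      eps A B (x t) (jj t) * eps A B (x (t + 1)) (jj t) := by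
    intro t ht
    rw [Finset.mem_range] at ht
    exact sg_spec H (hj1 t ht).1 (hj1 t ht).2
  unfold pprod
  rw [Finset.prod_congr rfl hsg, Finset.prod_mul_distrib]
  have hE1 : (∏ t ∈ Finset.range (K + 2), eps A B (x t) (jj t)) = e1 := by
    rw [he1, ← Fin.prod_univ_eq_prod_range (fun t => eps A B (x t) (jj t)) (K + 2)]
  have hE2 : (∏ t ∈ Finset.range (K + 2), eps A B (x (t + 1)) (jj t)) = e2 := by
    have step1 : e2 = ∏ t ∈ Finset.range (K + 2),
        eps A B (x ((t + 1) % (K + 2))) (jj t) := by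
      rw [he2, ← Fin.prod_univ_eq_prod_range
        (fun t => eps A B (x ((t + 1) % (K + 2))) (jj t)) (K + 2)]
      apply Finset.prod_congr rfl
      intro t _
      rw [hval1]
    rw [step1]
    apply Finset.prod_congr rfl
    intro t ht
    rw [Finset.mem_range] at ht
    rw [xmod hx (by omega) (by omega)]
  rw [hE1, hE2, he12]
  rcases he2pm with h | h <;> rw [h] <;> norm_num

lemma chordless {A B : Matrix (Fin n) (Fin m) ℝ} (H : Hyp A B) {k : ℕ} {x : ℕ → Fin n}
    (hk3 : 3 ≤ k) (hp : IsPath A k x) (hx : x k = x 0)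
    (hrep : ∀ a, a < k → x (a + 1) ≠ x a)
    (hch : ∀ a b, a < b → b < k → 2 ≤ b - a → ¬(a = 0 ∧ b = k - 1) →
      ¬ Edge A (x a) (x b)) :
    pprod A B k x = 1 := by
  classical
  -- adjacency classification of edges
  have hadj : ∀ a b, a < k → b < k → Edge A (x a) (x b) →
      a = b ∨ b = a + 1 ∨ a = b + 1 ∨ (a = 0 ∧ b = k - 1) ∨ (b = 0 ∧ a = k - 1) := by
    intro a b ha hb hE
    by_contra hcon
    push_neg at hcon
    obtain ⟨h1, h2, h3, h4, h5⟩ := hcon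
    rcases lt_trichotomy a b with h | h | h
    · exact hch a b h hb (by omega) (by omega) hE
    · exact h1 h
    · exact hch b a h ha (by omega) (by omega) hE.symm
  -- witness columns
  set jj : ℕ → Fin m := fun t =>
    if h : Edge A (x t) (x (t + 1)) then h.choose else (hp 0 (by omega)).choose with hjj
  have hj1 : ∀ t, t < k → A (x t) (jj t) ≠ 0 ∧ A (x (t + 1)) (jj t) ≠ 0 := by
    intro t ht
    have hE := hp t ht
    rw [hjj]
    simp only [dif_pos hE]
    exact hE.choose_spec
  by_cases hclm : ∀ a b, a < k → b < k → A (x a) (jj b) ≠ 0 → a = b ∨ a = (b + 1) % k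
  · exact bimono_case H hk3 hp hx hj1 hclm
  · push_neg at hclm
    obtain ⟨a, b, ha, hb, hne0, hne1, hne2⟩ := hclm
    rcases Nat.lt_or_ge k 4 with hk4 | hk4
    · -- k = 3 : triangle case
      have hkk : k = 3 := by omega
      exact triangle_case H hkk hp hx hj1 ha hb hne1 hne2 hne0
    · -- k ≥ 4 : derive a contradiction (chord exists)
      exfalso
      have hxb : A (x b) (jj b) ≠ 0 := (hj1 b hb).1
      have hxb1 : A (x ((b + 1) % k)) (jj b) ≠ 0 := by
        rw [xmod hx (by omega) (by omega)]
        exact (hj1 b hb).2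
      have hE1 : Edge A (x a) (x b) := ⟨jj b, hne0, hxb⟩
      have hE2 : Edge A (x a) (x ((b + 1) % k)) := ⟨jj b, hne0, hxb1⟩
      have hc1 := hadj a b ha hb hE1
      have hc2 := hadj a ((b + 1) % k) ha (Nat.mod_lt _ (by omega)) hE2
      have hmod : ((b + 1) % k = b + 1 ∧ b + 1 < k) ∨ ((b + 1) % k = 0 ∧ b + 1 = k) := by
        rcases lt_or_eq_of_le (Nat.succ_le_of_lt hb) with h | h
        · exact Or.inl ⟨Nat.mod_eq_of_lt h, h⟩
        · exact Or.inr ⟨by rw [show b + 1 = k from h, Nat.mod_self], h⟩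
      rcases hmod with ⟨hm1, hm2⟩ | ⟨hm1, hm2⟩ <;>
        rw [hm1] at hc2 hne2 <;>
        rcases hc1 with h | h | h | h | h <;>
        rcases hc2 with h' | h' | h' | h' | h' <;>
        omega

theorem cyc {A B : Matrix (Fin n) (Fin m) ℝ} (H : Hyp A B) :
    ∀ (k : ℕ) (x : ℕ → Fin n), 0 < k → IsPath A k x → x k = x 0 → pprod A B k x = 1 := by
  intro k
  induction k using Nat.strong_induction_on with
  | _ k IH =>
  intro x hk hp hx
  by_cases hk1 : k = 1
  · subst hk1
    unfold pprod
    rw [Finset.prod_range_one, hx, sg_self H]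
  by_cases hk2 : k = 2
  · subst hk2
    unfold pprod
    rw [show (2:ℕ) = 1 + 1 from rfl, Finset.prod_range_succ, Finset.prod_range_one]
    rw [show (1:ℕ) + 1 = 2 from rfl, hx]
    exact sg_mul_symm H (x 0) (x 1)
  have hk3 : 3 ≤ k := by omega
  by_cases hrep : ∃ a, a < k ∧ x (a + 1) = x a
  · obtain ⟨a, ha, hr⟩ := hrep
    obtain ⟨y, hy1, hy2, hy3⟩ := contract H hk3 hp hx ha hr
    rw [← hy3]
    exact IH (k - 1) (by omega) y (by omega) hy1 hy2
  by_cases hch : ∃ a b, a < b ∧ b < k ∧ 2 ≤ b - a ∧ ¬(a = 0 ∧ b = k - 1) ∧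
      Edge A (x a) (x b)
  · obtain ⟨a, b, hab, hbk, hba2, hne, hE⟩ := hch
    obtain ⟨w, v, hw1, hw2, hv1, hv2, hprod⟩ := chordsplit H hp hx hab hbk hE
    rw [hprod, IH (b - a + 1) (by omega) w (by omega) hw1 hw2,
      IH (k - (b - a) + 1) (by omega) v (by omega) hv1 hv2, one_mul]
  · push_neg at hrep hch
    exact chordless H hk3 hp hx (fun a ha => (hrep a ha))
      (fun a b h1 h2 h3 h4 => hch a b h1 h2 h3 (fun h5 h6 => h4 ⟨h5, h6⟩))

/-- reachability with path sign -/
def RV (A B : Matrix (Fin n) (Fin m) ℝ) (a b : Fin n) (v : ℝ) : Prop :=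
  ∃ (k : ℕ) (x : ℕ → Fin n), x 0 = a ∧ x k = b ∧ IsPath A k x ∧ pprod A B k x = v

def Reach (A B : Matrix (Fin n) (Fin m) ℝ) (a b : Fin n) : Prop := ∃ v, RV A B a b v

lemma RV_refl (A B : Matrix (Fin n) (Fin m) ℝ) (a : Fin n) : RV A B a a 1 :=
  ⟨0, fun _ => a, rfl, rfl, fun t ht => absurd ht (Nat.not_lt_zero t), Finset.prod_range_zero _⟩

lemma RV_pm {A B : Matrix (Fin n) (Fin m) ℝ} {a b : Fin n} {v : ℝ} (h : RV A B a b v) :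
    v = 1 ∨ v = -1 := by
  obtain ⟨k, x, _, _, _, hpr⟩ := h
  rw [← hpr]
  exact pprod_pm A B k x

lemma RV_symm {A B : Matrix (Fin n) (Fin m) ℝ} (H : Hyp A B) {a b : Fin n} {v : ℝ}
    (h : RV A B a b v) : RV A B b a v := by
  obtain ⟨k, x, hx0, hxk, hpath, hpr⟩ := h
  refine ⟨k, fun t => x (k - t), by simpa using hxk, by simpa using hx0, ?_, ?_⟩
  · intro t ht
    have h1 : k - t - 1 + 1 = k - t := by omega
    have := hpath (k - t - 1) (by omega)
    rw [h1] at this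
    exact this.symm
  · rw [← hpr]
    unfold pprod
    rw [← Finset.prod_range_reflect (fun j => sg A B (x j) (x (j + 1))) k]
    apply Finset.prod_congr rfl
    intro t ht
    rw [Finset.mem_range] at ht
    show sg A B (x (k - t)) (x (k - (t + 1))) = sg A B (x (k - 1 - t)) (x (k - 1 - t + 1))
    rw [show k - (t + 1) = k - 1 - t by omega, show k - t = k - 1 - t + 1 by omega]
    exact sg_symm H _ _

lemma RV_trans {A B : Matrix (Fin n) (Fin m) ℝ} {a b c : Fin n} {v w : ℝ}
    (h1 : RV A B a b v) (h2 : RV A B b c w) : RV A B a c (v * w) := by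
  obtain ⟨k₁, x₁, hx0, hxk, hpath1, hpr1⟩ := h1
  obtain ⟨k₂, x₂, hy0, hyk, hpath2, hpr2⟩ := h2
  set z : ℕ → Fin n := fun t => if t < k₁ then x₁ t else x₂ (t - k₁) with hz
  have hbc : x₂ 0 = x₁ k₁ := by rw [hy0, hxk]
  have hzt : ∀ t, k₁ ≤ t → z t = x₂ (t - k₁) := by
    intro t ht
    rw [hz]; simp only [if_neg (by omega : ¬ t < k₁)]
  have hz0 : z 0 = a := by
    rcases Nat.eq_zero_or_pos k₁ with h | h
    · rw [hzt 0 (by omega), show 0 - k₁ = 0 by omega, hy0, ← hxk, h]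
      exact hx0
    · rw [hz]; simp only [if_pos h]; exact hx0
  have hze : z (k₁ + k₂) = c := by rw [hzt _ (by omega), Nat.add_sub_cancel_left, hyk]
  have hmid : ∀ t, t ≤ k₁ → z t = x₁ t := by
    intro t ht
    rcases lt_or_eq_of_le ht with h | h
    · rw [hz]; simp only [if_pos h]
    · subst h; rw [hzt t le_rfl, Nat.sub_self, hbc]
  refine ⟨k₁ + k₂, z, hz0, hze, ?_, ?_⟩
  · intro t ht
    rcases Nat.lt_or_ge t k₁ with h | h
    · rw [hmid t (by omega), hmid (t + 1) (by omega)]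
      exact hpath1 t h
    · rw [hzt t h, hzt (t + 1) (by omega), show t + 1 - k₁ = t - k₁ + 1 by omega]
      exact hpath2 (t - k₁) (by omega)
  · unfold pprod
    rw [← Finset.prod_range_mul_prod_Ico _ (by omega : k₁ ≤ k₁ + k₂)]
    rw [← hpr1, ← hpr2]
    unfold pprod
    congr 1
    · apply Finset.prod_congr rfl
      intro t ht
      rw [Finset.mem_range] at ht
      rw [hmid t (by omega), hmid (t + 1) (by omega)]
    · rw [Finset.prod_Ico_eq_prod_range, Nat.add_sub_cancel_left]
      apply Finset.prod_congr rfl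
      intro t ht
      rw [hzt (k₁ + t) (by omega), hzt (k₁ + t + 1) (by omega),
        Nat.add_sub_cancel_left, show k₁ + t + 1 - k₁ = t + 1 by omega]

lemma RV_edge {A B : Matrix (Fin n) (Fin m) ℝ} {a b : Fin n} (h : Edge A a b) :
    RV A B a b (sg A B a b) := by
  refine ⟨1, fun t => if t = 0 then a else b, by simp, by simp, ?_, ?_⟩
  · intro t ht
    have : t = 0 := by omega
    subst this
    simpa using h
  · unfold pprod
    rw [Finset.prod_range_one]
    simp

lemma RV_unique {A B : Matrix (Fin n) (Fin m) ℝ} (H : Hyp A B) {a b : Fin n} {v w : ℝ}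
    (h1 : RV A B a b v) (h2 : RV A B a b w) : v = w := by
  have hcyc := RV_trans h1 (RV_symm H h2)
  obtain ⟨k, x, hx0, hxk, hpath, hpr⟩ := hcyc
  have hvw : v * w = 1 := by
    rcases Nat.eq_zero_or_pos k with h | h
    · rw [← hpr, h]; exact Finset.prod_range_zero _
    · rw [← hpr]
      exact cyc H k x h hpath (by rw [hxk, hx0])
  rcases RV_pm h1 with h | h <;> rcases RV_pm h2 with h' | h' <;>
    rw [h, h'] <;> rw [h, h'] at hvw <;> norm_num at hvw

lemma Reach_refl (A B : Matrix (Fin n) (Fin m) ℝ) (a : Fin n) : Reach A B a a :=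
  ⟨1, RV_refl A B a⟩

lemma Reach_symm {A B : Matrix (Fin n) (Fin m) ℝ} (H : Hyp A B) {a b : Fin n}
    (h : Reach A B a b) : Reach A B b a := by
  obtain ⟨v, hv⟩ := h; exact ⟨v, RV_symm H hv⟩

lemma Reach_trans {A B : Matrix (Fin n) (Fin m) ℝ} {a b c : Fin n}
    (h1 : Reach A B a b) (h2 : Reach A B b c) : Reach A B a c := by
  obtain ⟨v, hv⟩ := h1; obtain ⟨w, hw⟩ := h2; exact ⟨v * w, RV_trans hv hw⟩

open Classical in
noncomputable def ps (A B : Matrix (Fin n) (Fin m) ℝ) (a b : Fin n) : ℝ :=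
  if h : Reach A B a b then h.choose else 1

lemma ps_spec {A B : Matrix (Fin n) (Fin m) ℝ} (H : Hyp A B) {a b : Fin n} {v : ℝ}
    (h : RV A B a b v) : ps A B a b = v := by
  unfold ps
  rw [dif_pos ⟨v, h⟩]
  exact RV_unique H (⟨v, h⟩ : Reach A B a b).choose_spec h

lemma ps_rv {A B : Matrix (Fin n) (Fin m) ℝ} {a b : Fin n} (h : Reach A B a b) :
    RV A B a b (ps A B a b) := by
  unfold ps
  rw [dif_pos h]
  exact h.choose_spec

open Classical in
noncomputable def rep (A B : Matrix (Fin n) (Fin m) ℝ) (i : Fin n) : Fin n :=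
  if hn : n = 0 then i else
    (Finset.univ.filter (fun w => Reach A B w i)).min'
      ⟨i, Finset.mem_filter.mpr ⟨Finset.mem_univ i, Reach_refl A B i⟩⟩

lemma rep_reach {A B : Matrix (Fin n) (Fin m) ℝ} (i : Fin n) : Reach A B (rep A B i) i := by
  classical
  unfold rep
  split
  · exact Reach_refl A B i
  · have := Finset.min'_mem (Finset.univ.filter (fun w => Reach A B w i))
      ⟨i, Finset.mem_filter.mpr ⟨Finset.mem_univ i, Reach_refl A B i⟩⟩
    rw [Finset.mem_filter] at this
    exact this.2

lemma rep_congr {A B : Matrix (Fin n) (Fin m) ℝ} (H : Hyp A B) {i i' : Fin n}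
    (h : Reach A B i i') : rep A B i = rep A B i' := by
  classical
  unfold rep
  split
  · next hn => exact absurd i.isLt (by omega)
  · have hset : (Finset.univ.filter (fun w => Reach A B w i)) =
        (Finset.univ.filter (fun w => Reach A B w i')) := by
      apply Finset.filter_congr
      intro w _
      exact ⟨fun hw => Reach_trans hw h, fun hw => Reach_trans hw (Reach_symm H h)⟩
    congr 1

noncomputable def tau (A B : Matrix (Fin n) (Fin m) ℝ) (i : Fin n) : ℝ :=
  ps A B (rep A B i) i

lemma tau_pm {A B : Matrix (Fin n) (Fin m) ℝ} (i : Fin n) :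
    tau A B i = 1 ∨ tau A B i = -1 :=
  RV_pm (ps_rv (rep_reach i))

lemma tau_sq {A B : Matrix (Fin n) (Fin m) ℝ} (i : Fin n) :
    tau A B i * tau A B i = 1 := by
  rcases tau_pm (A := A) (B := B) i with h | h <;> rw [h] <;> norm_num

lemma tkey {A B : Matrix (Fin n) (Fin m) ℝ} (H : Hyp A B) {i i₀ : Fin n} {j : Fin m}
    (hi : A i j ≠ 0) (hi₀ : A i₀ j ≠ 0) :
    tau A B i * tau A B i₀ = eps A B i j * eps A B i₀ j := by
  have hE : Edge A i i₀ := ⟨j, hi, hi₀⟩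
  have hreach : Reach A B i i₀ := ⟨sg A B i i₀, RV_edge hE⟩
  have hr : rep A B i = rep A B i₀ := rep_congr H hreach
  have h1 : RV A B (rep A B i) i (tau A B i) := ps_rv (rep_reach i)
  have h2 : RV A B (rep A B i) i₀ (tau A B i₀) := by
    rw [hr]; exact ps_rv (rep_reach i₀)
  have h3 : RV A B (rep A B i) i₀ (tau A B i * sg A B i i₀) := RV_trans h1 (RV_edge hE)
  have hu : tau A B i₀ = tau A B i * sg A B i i₀ := RV_unique H h2 h3
  rw [hu, ← mul_assoc, tau_sq, one_mul, sg_spec H hi hi₀]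

open Classical in
noncomputable def sigmaf (A B : Matrix (Fin n) (Fin m) ℝ) (j : Fin m) : ℝ :=
  if h : ∃ i, A i j ≠ 0 then eps A B h.choose j * tau A B h.choose else 1

lemma sigmaf_pm (A B : Matrix (Fin n) (Fin m) ℝ) (j : Fin m) :
    sigmaf A B j = 1 ∨ sigmaf A B j = -1 := by
  unfold sigmaf
  split
  · next h =>
    rcases eps_pm A B h.choose j with h1 | h1 <;> rcases tau_pm (A := A) (B := B) h.choose
      with h2 | h2 <;> rw [h1, h2] <;> norm_num
  · left; rfl

theorem core_thm {A B : Matrix (Fin n) (Fin m) ℝ} (H : Hyp A B) :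
    ∃ (τ : Fin n → ℝ) (σ : Fin m → ℝ), (∀ i, τ i = 1 ∨ τ i = -1) ∧
      (∀ j, σ j = 1 ∨ σ j = -1) ∧ ∀ i j, B i j = τ i * σ j * A i j := by
  classical
  refine ⟨tau A B, sigmaf A B, fun i => tau_pm i, fun j => sigmaf_pm A B j, ?_⟩
  intro i j
  by_cases hA : A i j = 0
  · rw [B_eq H, hA]; ring
  · have hex : ∃ i', A i' j ≠ 0 := ⟨i, hA⟩
    unfold sigmaf
    rw [dif_pos hex]
    have hi₀ := hex.choose_spec
    have hk := tkey H hA hi₀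
    have e0 := eps_sq A B hex.choose j
    have heq : eps A B i j = tau A B i * (eps A B hex.choose j * tau A B hex.choose) := by
      linear_combination (-(eps A B hex.choose j)) * hk - eps A B i j * e0
    rw [B_eq H, heq]

open Classical in
lemma minor_embed {k : ℕ} (A : Matrix (Fin n) (Fin m) ℝ) (f₀ : Fin n → Fin m)
    (hA0 : ∀ i i', A i (f₀ i') = if i = i' then (1 : ℝ) else 0)
    (u : Fin k → Fin n) (hu : Function.Injective u) (v : Fin k → Fin m) :
    (A.submatrix id (fun i => if h : ∃ t, u t = i then v h.choose else f₀ i)).det =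
      (A.submatrix u v).det := by
  classical
  set f : Fin n → Fin m := fun i => if h : ∃ t, u t = i then v h.choose else f₀ i with hf
  haveI : Fintype ↥(Set.range u)ᶜ := (Set.toFinite _).fintype
  set e : (Fin k ⊕ ↥(Set.range u)ᶜ) ≃ Fin n :=
    (Equiv.sumCongr (Equiv.ofInjective u hu) (Equiv.refl ↥(Set.range u)ᶜ)).trans
      (Equiv.Set.sumCompl (Set.range u)) with he
  have hinl : ∀ t : Fin k, e (Sum.inl t) = u t := by
    intro t
    simp [he, Equiv.Set.sumCompl]; rfl
  have hinr : ∀ z : ↥(Set.range u)ᶜ, e (Sum.inr z) = z.val := by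
    intro z
    simp [he, Equiv.Set.sumCompl]; rfl
  have hblocks : (A.submatrix id f).submatrix ⇑e ⇑e =
      Matrix.fromBlocks (A.submatrix u v) 0
        (Matrix.of fun (z : ↥(Set.range u)ᶜ) t => A z.val (v t)) 1 := by
    ext i j
    cases i with
    | inl t =>
      cases j with
      | inl t' =>
        simp only [Matrix.submatrix_apply, hinl, Matrix.fromBlocks_apply₁₁, id]
        have hex : ∃ s, u s = u t' := ⟨t', rfl⟩
        rw [hf]
        simp only [dif_pos hex]
        rw [hu hex.choose_spec]
      | inr z =>
        simp only [Matrix.submatrix_apply, hinl, hinr, Matrix.fromBlocks_apply₁₂, id]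
        have hnex : ¬ ∃ s, u s = z.val := by
          intro ⟨s, hs⟩
          exact z.2 ⟨s, hs⟩
        rw [hf]
        simp only [dif_neg hnex]
        rw [hA0]
        rw [if_neg]
        · simp
        · intro hc
          exact z.2 ⟨t, hc⟩
    | inr z =>
      cases j with
      | inl t' =>
        simp only [Matrix.submatrix_apply, hinl, hinr, Matrix.fromBlocks_apply₂₁, id]
        have hex : ∃ s, u s = u t' := ⟨t', rfl⟩
        rw [hf]
        simp only [dif_pos hex]
        rw [hu hex.choose_spec]
        simp [Matrix.of_apply]
      | inr z' =>
        simp only [Matrix.submatrix_apply, hinr, Matrix.fromBlocks_apply₂₂, id]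
        have hnex : ¬ ∃ s, u s = z'.val := fun ⟨s, hs⟩ => z'.2 ⟨s, hs⟩
        rw [hf]
        simp only [dif_neg hnex]
        rw [hA0, Matrix.one_apply]
        by_cases hzz : z = z'
        · rw [if_pos (by rw [hzz]), if_pos hzz]
        · rw [if_neg (fun hc => hzz (Subtype.ext hc)), if_neg hzz]
  calc (A.submatrix id f).det = ((A.submatrix id f).submatrix ⇑e ⇑e).det :=
        (Matrix.det_submatrix_equiv_self e _).symm
    _ = (A.submatrix u v).det := by
        rw [hblocks, Matrix.det_fromBlocks_zero₁₂, Matrix.det_one, mul_one]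

lemma exists_good_cols (N : Matrix (Fin n) (Fin m) ℝ) (h : N.rank = n) :
    ∃ f₀ : Fin n → Fin m, Function.Injective f₀ ∧ IsUnit (N.submatrix id f₀).det := by
  classical
  have hspan : Submodule.span ℝ (Set.range Nᵀ) = ⊤ := by
    apply Submodule.eq_top_of_finrank_eq
    rw [Module.finrank_fin_fun]; exact (Matrix.rank_eq_finrank_span_cols N).symm.trans h
  obtain ⟨b, hbsub, hbspan, hbind⟩ := exists_linearIndependent ℝ (Set.range Nᵀ)
  rw [hspan] at hbspan
  haveI : Fintype b := (LinearIndependent.setFinite hbind).fintype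
  let Bas : Module.Basis b ℝ (Fin n → ℝ) := Module.Basis.mk hbind (by rw [Subtype.range_coe, hbspan])
  have hcard : Fintype.card b = n := by
    rw [← Module.finrank_eq_card_basis Bas, Module.finrank_fin_fun]
  let e : Fin n ≃ b := (Fintype.equivFinOfCardEq hcard).symm
  have hpre : ∀ w : b, ∃ jj : Fin m, Nᵀ jj = (w : Fin n → ℝ) := fun w => hbsub w.2
  choose cix hcix using hpre
  refine ⟨fun t => cix (e t), ?_, ?_⟩
  · intro t t' ht
    have ht' : cix (e t) = cix (e t') := ht
    have h1 : ((e t : b) : Fin n → ℝ) = ((e t' : b) : Fin n → ℝ) := by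
      rw [← hcix (e t), ← hcix (e t'), ht']
    exact e.injective (Subtype.ext h1)
  · rw [← Matrix.isUnit_iff_isUnit_det, ← Matrix.linearIndependent_cols_iff_isUnit]
    have hcols : (fun t => (N.submatrix id (fun s => cix (e s)))ᵀ t) =
        fun t => ((e t : b) : Fin n → ℝ) := by
      funext t
      funext i
      rw [← hcix (e t)]
      rfl
    show LinearIndependent ℝ (fun t => (N.submatrix id (fun s => cix (e s)))ᵀ t); rw [hcols]
    exact hbind.comp (fun t => e t) e.injective

lemma subIdMul {p : ℕ} (X : Matrix (Fin n) (Fin n) ℝ) (N : Matrix (Fin n) (Fin m) ℝ)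
    (f : Fin p → Fin m) : (X * N).submatrix id f = X * N.submatrix id f := by
  ext i j
  simp [Matrix.mul_apply, Matrix.submatrix_apply]

end Stmt19aux

open Stmt19aux in
theorem stmt_19 {n m : ℕ} (M M' : Matrix (Fin n) (Fin m) ℝ)
    (hM : M.rank = n) (hM' : M'.rank = n) (c : ℝ) (hc : 0 < c)
    (h : ∀ f : Fin n → Fin m, StrictMono f →
      |(M.submatrix id f).det| = c * |(M'.submatrix id f).det|) :
    ∃ (S : Matrix (Fin n) (Fin n) ℝ) (σ : Fin m → ℝ),
      IsUnit S.det ∧ (∀ j, σ j = 1 ∨ σ j = -1) ∧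
      M' = S * M * Matrix.diagonal σ := by
  classical
  -- step 1: extend hypothesis to arbitrary f
  have hAll : ∀ f : Fin n → Fin m,
      |(M.submatrix id f).det| = c * |(M'.submatrix id f).det| := by
    intro f
    by_cases hf : Function.Injective f
    · set π := Tuple.sort f with hπ
      have hmono : StrictMono (f ∘ π) :=
        (Tuple.monotone_sort f).strictMono_of_injective (hf.comp π.injective)
      have hs := h (f ∘ π) hmono
      have habs : ∀ N : Matrix (Fin n) (Fin m) ℝ,
          |(N.submatrix id (f ∘ ⇑π)).det| = |(N.submatrix id f).det| := by
        intro N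
        have : N.submatrix id (f ∘ ⇑π) = (N.submatrix id f).submatrix id ⇑π := by
          rw [Matrix.submatrix_submatrix]
          rfl
        rw [this, Matrix.det_permute']
        rcases Int.units_eq_one_or (Equiv.Perm.sign π) with hsgn | hsgn <;>
          rw [hsgn] <;> push_cast <;> simp [abs_neg]
      rw [habs M, habs M'] at hs
      exact hs
    · rw [Function.not_injective_iff] at hf
      obtain ⟨i, i', hii, hne⟩ := hf
      have hz : ∀ N : Matrix (Fin n) (Fin m) ℝ, (N.submatrix id f).det = 0 := by
        intro N
        apply Matrix.det_zero_of_column_eq hne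
        intro r
        simp [Matrix.submatrix_apply, hii]
      rw [hz M, hz M']
      simp
  -- step 2: full-rank columns
  obtain ⟨f₀, hf₀inj, hQunit⟩ := exists_good_cols M' hM'
  set P : Matrix (Fin n) (Fin n) ℝ := M.submatrix id f₀ with hP
  set Q : Matrix (Fin n) (Fin n) ℝ := M'.submatrix id f₀ with hQ
  have hQdet : Q.det ≠ 0 := by
    intro hc'
    rw [isUnit_iff_ne_zero] at hQunit
    exact hQunit hc'
  have hPdet : P.det ≠ 0 := by
    have := hAll f₀
    intro hc'
    rw [← hP, ← hQ] at this
    rw [hc'] at this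
    simp only [abs_zero] at this
    have := this.symm
    rcases mul_eq_zero.mp this with h' | h'
    · linarith
    · exact hQdet (abs_eq_zero.mp h')
  have hPunit : IsUnit P.det := isUnit_iff_ne_zero.mpr hPdet
  set A : Matrix (Fin n) (Fin m) ℝ := P⁻¹ * M with hA
  set B : Matrix (Fin n) (Fin m) ℝ := Q⁻¹ * M' with hB
  have hA0 : ∀ i i', A i (f₀ i') = if i = i' then (1 : ℝ) else 0 := by
    intro i i'
    have : A.submatrix id f₀ = 1 := by
      rw [hA, subIdMul, ← hP, Matrix.nonsing_inv_mul P hPunit]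
    have h2 := congrFun (congrFun this i) i'
    rw [Matrix.submatrix_apply, id] at h2
    rw [h2, Matrix.one_apply]
  have hB0 : ∀ i i', B i (f₀ i') = if i = i' then (1 : ℝ) else 0 := by
    intro i i'
    have : B.submatrix id f₀ = 1 := by
      rw [hB, subIdMul, ← hQ, Matrix.nonsing_inv_mul Q hQunit]
    have h2 := congrFun (congrFun this i) i'
    rw [Matrix.submatrix_apply, id] at h2
    rw [h2, Matrix.one_apply]
  -- step 3: |det| equality for all id-submatrices of A, B
  have hPinv : |P⁻¹.det| * |P.det| = 1 := by
    rw [← abs_mul, ← Matrix.det_mul, Matrix.nonsing_inv_mul P hPunit, Matrix.det_one, abs_one]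
  have hQinv : |Q⁻¹.det| * |Q.det| = 1 := by
    rw [← abs_mul, ← Matrix.det_mul, Matrix.nonsing_inv_mul Q hQunit, Matrix.det_one, abs_one]
  have hconst : |P⁻¹.det| * c = |Q⁻¹.det| := by
    have h1 := hAll f₀
    rw [← hP, ← hQ] at h1
    linear_combination (-(c * |P⁻¹.det|)) * hQinv + |Q⁻¹.det| * hPinv -
      |P⁻¹.det| * |Q⁻¹.det| * h1
  have hABdet : ∀ f : Fin n → Fin m,
      |(A.submatrix id f).det| = |(B.submatrix id f).det| := by
    intro f
    rw [hA, hB, subIdMul, subIdMul, Matrix.det_mul, Matrix.det_mul, abs_mul, abs_mul,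
      ← hconst, hAll f]
    ring
  -- step 4: Hyp A B
  have hHyp : Hyp A B := by
    intro k u v
    by_cases hu : Function.Injective u
    · rw [← minor_embed A f₀ hA0 u hu v, ← minor_embed B f₀ hB0 u hu v]
      exact hABdet _
    · rw [Function.not_injective_iff] at hu
      obtain ⟨i, i', hii, hne⟩ := hu
      have hz : ∀ N : Matrix (Fin n) (Fin m) ℝ, (N.submatrix u v).det = 0 := by
        intro N
        apply Matrix.det_zero_of_row_eq hne
        funext r
        simp [Matrix.submatrix_apply, hii]
      rw [hz A, hz B]
  -- step 5: core theorem and assembly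
  obtain ⟨τ, σ, hτpm, hσpm, hBA⟩ := core_thm hHyp
  refine ⟨Q * Matrix.diagonal τ * P⁻¹, σ, ?_, hσpm, ?_⟩
  · rw [Matrix.det_mul, Matrix.det_mul]
    apply IsUnit.mul
    apply IsUnit.mul
    · exact hQunit
    · rw [Matrix.det_diagonal]
      rw [isUnit_iff_ne_zero]
      rw [Finset.prod_ne_zero_iff]
      intro i _
      rcases hτpm i with h' | h' <;> rw [h'] <;> norm_num
    · exact Matrix.isUnit_nonsing_inv_det P hPunit
  · have hBmat : B = Matrix.diagonal τ * A * Matrix.diagonal σ := by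
      ext i j
      rw [Matrix.mul_apply]
      have : ∀ x, (Matrix.diagonal τ * A) i x * Matrix.diagonal σ x j =
          if x = j then τ i * A i x * σ j else 0 := by
        intro x
        rw [Matrix.diagonal_mul]
        by_cases hx : x = j
        · subst hx
          rw [Matrix.diagonal_apply_eq, if_pos rfl]
        · rw [Matrix.diagonal_apply_ne _ hx, mul_zero, if_neg hx]
      rw [Finset.sum_congr rfl (fun x _ => this x), Finset.sum_ite_eq' Finset.univ j
        (fun x => τ i * A i x * σ j)]
      rw [if_pos (Finset.mem_univ j), hBA i j]
      ring
    have hM'B : M' = Q * B := by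
      rw [hB, Matrix.mul_nonsing_inv_cancel_left Q M' hQunit]
    rw [hM'B, hBmat, hA]
    simp only [Matrix.mul_assoc]
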